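/- Quadratic coercivity of the effective Hamiltonian (power case): let R_q ≥ 1 be any real constant with R_q ≥ 1 + R_q^{q/(q+1)}. If (u, m, H̄) is a classical solution of the power-type ergodic MFG system, then |P|²/2 − (1+R_q) ∫_Q v(y) dy − R_q α^q ≤ H̄ ≤ |P|²/2 − α^q. -/

import Mathlib

open MeasureTheory Real Set

set_option maxHeartbeats 1000000

/-- Partial derivative in direction `i`. -/
noncomputable def pd {n : ℕ} (i : Fin n) (f : (Fin n → ℝ) → ℝ) (x : Fin n → ℝ) : ℝ :=
  fderiv ℝ f x (Pi.single i 1)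

/-- Laplacian: sum of second partial derivatives. -/
noncomputable def lap {n : ℕ} (f : (Fin n → ℝ) → ℝ) (x : Fin n → ℝ) : ℝ :=
  ∑ i, pd i (pd i f) x

/-- Divergence of a vector field. -/
noncomputable def dvg {n : ℕ} (F : (Fin n → ℝ) → Fin n → ℝ) (x : Fin n → ℝ) : ℝ :=
  ∑ i, pd i (fun y => F y i) x

/-- `ℤⁿ`-periodicity. -/
def ZPeriodic {n : ℕ} (f : (Fin n → ℝ) → ℝ) : Prop :=
  ∀ (k : Fin n → ℤ) (x : Fin n → ℝ), f (x + fun i => (k i : ℝ)) = f x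

/-- The unit cube `Q = [0,1]ⁿ`. -/
def unitCube (n : ℕ) : Set (Fin n → ℝ) := Set.Icc 0 1

/-- A classical solution `(u, m, H)` of the power-type ergodic MFG system
`-Δu + ½|∇u+P|² - v - αᑫ mᑫ = H`, `-Δm - div(m(∇u+P)) = 0`, `∫ u = 0`, `∫ m = 1`. -/
structure PowerMFG {n : ℕ} (v : (Fin n → ℝ) → ℝ) (P : Fin n → ℝ) (α q : ℝ)
    (u m : (Fin n → ℝ) → ℝ) (H : ℝ) : Prop where
  hu : ContDiff ℝ 2 u
  hm : ContDiff ℝ 2 m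
  hup : ZPeriodic u
  hmp : ZPeriodic m
  hmpos : ∀ x, 0 < m x
  hHJB : ∀ x, -lap u x + (∑ i, (pd i u x + P i) ^ 2) / 2 - v x - α ^ q * (m x) ^ q = H
  hFP : ∀ x, -lap m x - dvg (fun y j => m y * (pd j u y + P j)) x = 0
  humean : (∫ y in unitCube n, u y) = 0
  hmmean : (∫ y in unitCube n, m y) = 1


section basic
variable {n : ℕ}

lemma volume_unitCube : volume (unitCube n) = 1 := by
  rw [unitCube, Real.volume_Icc_pi]
  simp

lemma volume_unitCube_toReal : (volume (unitCube n)).toReal = 1 := by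
  rw [volume_unitCube]; simp

lemma intQ {f : (Fin n → ℝ) → ℝ} (hf : Continuous f) : IntegrableOn f (unitCube n) volume :=
  hf.integrableOn_Icc

lemma integral_const_unitCube (c : ℝ) : ∫ _ in unitCube n, c = c := by
  rw [setIntegral_const, measureReal_def, volume_unitCube_toReal, one_smul]

-- product rule
lemma pd_mul {f g : (Fin n → ℝ) → ℝ} (hf : Differentiable ℝ f) (hg : Differentiable ℝ g)
    (j : Fin n) (x : Fin n → ℝ) :
    pd j (fun y => f y * g y) x = pd j f x * g x + f x * pd j g x := by
  simp only [pd, fderiv_fun_mul (hf x) (hg x)]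
  simp [mul_comm]
  ring

lemma pd_add_const {f : (Fin n → ℝ) → ℝ} (c : ℝ) (j : Fin n) (x : Fin n → ℝ) :
    pd j (fun y => f y + c) x = pd j f x := by
  simp [pd, fderiv_add_const]

lemma dvg_mul {f : (Fin n → ℝ) → ℝ} {G : (Fin n → ℝ) → Fin n → ℝ}
    (hf : Differentiable ℝ f) (hG : ∀ j, Differentiable ℝ fun y => G y j) (x : Fin n → ℝ) :
    dvg (fun y j => f y * G y j) x = (∑ j, pd j f x * G x j) + f x * dvg G x := by
  rw [dvg, dvg, Finset.mul_sum, ← Finset.sum_add_distrib]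
  exact Finset.sum_congr rfl fun j _ => pd_mul hf (hG j) j x
end basic

-- periodicity of derivative
lemma ZPeriodic.pd_per {n : ℕ} {f : (Fin n → ℝ) → ℝ} (hper : ZPeriodic f)
    (hf : Differentiable ℝ f) (i : Fin n) : ZPeriodic (pd i f) := by
  intro k x
  set c : Fin n → ℝ := fun j => (k j : ℝ) with hc
  have hfc : (fun y : Fin n → ℝ => f (y + c)) = f := funext fun y => hper k y
  have ht : HasFDerivAt (fun y : Fin n → ℝ => y + c)
      (ContinuousLinearMap.id ℝ (Fin n → ℝ)) x := (hasFDerivAt_id x).add_const c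
  have h1 : HasFDerivAt (fun y : Fin n → ℝ => f (y + c)) (fderiv ℝ f (x + c)) x := by
    simpa [Function.comp_def] using ((hf (x + c)).hasFDerivAt).comp x ht
  rw [hfc] at h1
  simp only [pd, h1.fderiv]

lemma ZPeriodic.mul {n : ℕ} {f g : (Fin n → ℝ) → ℝ} (hf : ZPeriodic f) (hg : ZPeriodic g) :
    ZPeriodic (fun y => f y * g y) := fun k x => by simp [hf k x, hg k x]

lemma ZPeriodic.add_const {n : ℕ} {f : (Fin n → ℝ) → ℝ} (hf : ZPeriodic f) (c : ℝ) :
    ZPeriodic (fun y => f y + c) := fun k x => by simp [hf k x]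

lemma pd_contDiff {n : ℕ} {f : (Fin n → ℝ) → ℝ} {k : ℕ∞} (hf : ContDiff ℝ (k+1) f)
    (i : Fin n) : ContDiff ℝ k (pd i f) :=
  (hf.fderiv_right (le_refl _)).clm_apply contDiff_const

lemma pd_contDiff_one {n : ℕ} {f : (Fin n → ℝ) → ℝ} (hf : ContDiff ℝ 2 f)
    (i : Fin n) : ContDiff ℝ 1 (pd i f) := by
  refine pd_contDiff (hf.of_le ?_) i
  norm_num

lemma pd_continuous {n : ℕ} {f : (Fin n → ℝ) → ℝ} (hf : ContDiff ℝ 1 f)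
    (i : Fin n) : Continuous (pd i f) := by
  refine (pd_contDiff (k := 0) (hf.of_le ?_) i).continuous
  norm_num

lemma integral_dvg_zero {N : ℕ} (F : (Fin (N+1) → ℝ) → (Fin (N+1) → ℝ))
    (hF : ContDiff ℝ 1 F) (hFp : ∀ i, ZPeriodic fun y => F y i) :
    ∫ x in unitCube (N+1), dvg F x = 0 := by
  have hFd : Differentiable ℝ F := hF.differentiable one_ne_zero
  have hcomp : ∀ i, Differentiable ℝ fun y => F y i := fun i => differentiable_pi.1 hFd i
  have hdvg : ∀ x, dvg F x = ∑ i, fderiv ℝ F x (Pi.single i 1) i := by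
    intro x
    have : fderiv ℝ F x = ContinuousLinearMap.pi fun i => fderiv ℝ (fun y => F y i) x := by
      have := fderiv_pi (𝕜 := ℝ) (φ := fun i y => F y i) (x := x)
        (fun i => (hcomp i).differentiableAt)
      exact this
    simp [dvg, pd, this]
  have h0le : (0 : Fin (N+1) → ℝ) ≤ 1 := fun i => by norm_num
  have key := integral_divergence_of_hasFDerivAt_off_countable
      (a := (0 : Fin (N+1) → ℝ)) (b := (1 : Fin (N+1) → ℝ)) h0le F (fun x => fderiv ℝ F x)
      ∅ countable_empty hF.continuous.continuousOn
      (fun x _ => (hFd x).hasFDerivAt)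
      (by
        apply (Continuous.integrableOn_Icc ?_)
        refine continuous_finset_sum _ fun i _ => ?_
        exact (continuous_pi_iff.1
          ((ContinuousLinearMap.apply ℝ (Fin (N+1) → ℝ) (Pi.single i 1 : Fin (N+1) → ℝ)).continuous.comp
            (hF.continuous_fderiv one_ne_zero))) i)
  rw [unitCube]
  calc ∫ x in Set.Icc (0 : Fin (N+1) → ℝ) 1, dvg F x
      = ∫ x in Set.Icc (0 : Fin (N+1) → ℝ) 1, ∑ i, fderiv ℝ F x (Pi.single i 1) i := by
        refine setIntegral_congr_fun measurableSet_Icc fun x _ => hdvg x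
    _ = 0 := by
        rw [key]
        refine Finset.sum_eq_zero fun i _ => ?_
        have hface : ∀ x : Fin N → ℝ,
            F (Fin.insertNth i ((1 : Fin (N+1) → ℝ) i) x) i
              = F (Fin.insertNth i ((0 : Fin (N+1) → ℝ) i) x) i := by
          intro x
          have := hFp i (Pi.single i 1 : Fin (N+1) → ℤ) (Fin.insertNth i 0 x)
          have harg : (Fin.insertNth i (0:ℝ) x + fun j => ((Pi.single i 1 : Fin (N+1) → ℤ) j : ℝ))
              = Fin.insertNth i (1:ℝ) x := by
            funext j
            refine Fin.succAboveCases i ?_ ?_ j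
            · simp
            · intro l
              simp [Fin.insertNth_apply_succAbove, Pi.single_eq_of_ne (Fin.succAbove_ne i l)]
          simp only [harg] at this
          simpa using this
        rw [setIntegral_congr_fun measurableSet_Icc (fun x _ => hface x), sub_self]

-- ∫ lap = 0
lemma integral_lap_zero {N : ℕ} {u : (Fin (N+1) → ℝ) → ℝ} (hu : ContDiff ℝ 2 u)
    (hup : ZPeriodic u) : ∫ x in unitCube (N+1), lap u x = 0 := by
  have h2 : (∫ x in unitCube (N+1), dvg (fun y i => pd i u y) x) = 0 :=
    integral_dvg_zero _ (contDiff_pi.2 fun i => pd_contDiff_one hu i)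
      (fun i => hup.pd_per (hu.differentiable (by norm_num)) i)
  simpa [dvg, lap] using h2

-- ∫ pd i u = 0
lemma integral_pd_zero {N : ℕ} {u : (Fin (N+1) → ℝ) → ℝ} (hu : ContDiff ℝ 2 u)
    (hup : ZPeriodic u) (i : Fin (N+1)) : ∫ x in unitCube (N+1), pd i u x = 0 := by
  let F : (Fin (N+1) → ℝ) → Fin (N+1) → ℝ := fun y => Pi.single i (u y)
  have hcompeq : ∀ j, j ≠ i → (fun y => F y j) = fun _ => (0:ℝ) := by
    intro j hj
    funext y
    exact Pi.single_eq_of_ne hj _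
  have hcompi : (fun y => F y i) = u := by
    funext y
    exact Pi.single_eq_same _ _
  have hF : ContDiff ℝ 1 F := by
    refine contDiff_pi.2 fun j => ?_
    rcases eq_or_ne j i with rfl | hj
    · rw [hcompi]
      exact hu.of_le (by norm_num)
    · rw [hcompeq j hj]
      exact contDiff_const
  have hFp : ∀ j, ZPeriodic (fun y => F y j) := by
    intro j
    rcases eq_or_ne j i with rfl | hj
    · rw [hcompi]; exact hup
    · rw [hcompeq j hj]; intro k x; rfl
  have h2 := integral_dvg_zero F hF hFp
  have hdvg : ∀ x, dvg F x = pd i u x := by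
    intro x
    rw [dvg, Finset.sum_eq_single i]
    · rw [hcompi]
    · intro j _ hj
      rw [hcompeq j hj]
      simp [pd]
    · intro hi
      exact absurd (Finset.mem_univ i) hi
  rw [show (∫ x in unitCube (N+1), pd i u x) = ∫ x in unitCube (N+1), dvg F x from
    setIntegral_congr_fun (by rw [unitCube]; exact measurableSet_Icc)
      (fun x _ => (hdvg x).symm)]
  exact h2

lemma measQ {n : ℕ} : MeasurableSet (unitCube n) := by
  rw [unitCube]; exact measurableSet_Icc

lemma integral_green {N : ℕ} {f : (Fin (N+1) → ℝ) → ℝ} {G : (Fin (N+1) → ℝ) → Fin (N+1) → ℝ}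
    (hf : ContDiff ℝ 1 f) (hfp : ZPeriodic f)
    (hG : ∀ j, ContDiff ℝ 1 fun y => G y j) (hGp : ∀ j, ZPeriodic fun y => G y j) :
    (∫ x in unitCube (N+1), ((∑ j, pd j f x * G x j) + f x * dvg G x)) = 0 := by
  have h := integral_dvg_zero (fun y j => f y * G y j)
    (contDiff_pi.2 fun j => hf.mul (hG j)) (fun j => hfp.mul (hGp j))
  rw [show (∫ x in unitCube (N+1), ((∑ j, pd j f x * G x j) + f x * dvg G x))
      = ∫ x in unitCube (N+1), dvg (fun y j => f y * G y j) x from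
    setIntegral_congr_fun measQ (fun x _ =>
      (dvg_mul (hf.differentiable one_ne_zero)
        (fun j => (hG j).differentiable one_ne_zero) x).symm)]
  exact h

lemma setAvg_eq_integral {n : ℕ} (φ : (Fin n → ℝ) → ℝ) :
    (⨍ x in unitCube n, φ x) = ∫ x in unitCube n, φ x := by
  rw [setAverage_eq, measureReal_def, volume_unitCube_toReal]
  simp

lemma jensen_convex {n : ℕ} {g : ℝ → ℝ} {f : (Fin n → ℝ) → ℝ}
    (hg : ConvexOn ℝ (Ici 0) g) (hgc : ContinuousOn g (Ici 0))
    (hf : Continuous f) (hf0 : ∀ x, 0 ≤ f x) (hgf : Continuous fun x => g (f x)) :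
    g (∫ x in unitCube n, f x) ≤ ∫ x in unitCube n, g (f x) := by
  have h0 : volume (unitCube n) ≠ 0 := by rw [volume_unitCube]; exact one_ne_zero
  have ht : volume (unitCube n) ≠ ⊤ := by rw [volume_unitCube]; exact ENNReal.one_ne_top
  have key := hg.map_set_average_le hgc isClosed_Ici h0 ht
    (Filter.Eventually.of_forall fun x => hf0 x) (intQ hf) (intQ hgf)
  rwa [setAvg_eq_integral, setAvg_eq_integral] at key

lemma jensen_concave {n : ℕ} {g : ℝ → ℝ} {f : (Fin n → ℝ) → ℝ}
    (hg : ConcaveOn ℝ (Ici 0) g) (hgc : ContinuousOn g (Ici 0))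
    (hf : Continuous f) (hf0 : ∀ x, 0 ≤ f x) (hgf : Continuous fun x => g (f x)) :
    (∫ x in unitCube n, g (f x)) ≤ g (∫ x in unitCube n, f x) := by
  have h0 : volume (unitCube n) ≠ 0 := by rw [volume_unitCube]; exact one_ne_zero
  have ht : volume (unitCube n) ≠ ⊤ := by rw [volume_unitCube]; exact ENNReal.one_ne_top
  have key := hg.le_map_set_average hgc isClosed_Ici h0 ht
    (Filter.Eventually.of_forall fun x => hf0 x) (intQ hf) (intQ hgf)
  rwa [setAvg_eq_integral, setAvg_eq_integral] at key

lemma integral_sq_ge {n : ℕ} {f : (Fin n → ℝ) → ℝ} (hf : Continuous f) :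
    (∫ x in unitCube n, f x) ^ 2 ≤ ∫ x in unitCube n, (f x) ^ 2 := by
  set c := ∫ x in unitCube n, f x with hc
  have h : 0 ≤ ∫ x in unitCube n, (f x - c) ^ 2 :=
    setIntegral_nonneg measQ (fun x _ => sq_nonneg _)
  have e0 : ∀ x : Fin n → ℝ, (f x - c) ^ 2 = (f x) ^ 2 - 2 * c * f x + c ^ 2 := by
    intro x; ring
  rw [setIntegral_congr_fun measQ (fun x _ => e0 x)] at h
  rw [integral_add (intQ ((hf.fun_pow 2).fun_sub (continuous_const.fun_mul hf))) (intQ continuous_const),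
    integral_sub (intQ (hf.fun_pow 2)) (intQ (continuous_const.fun_mul hf)),
    integral_const_mul, integral_const_unitCube] at h
  rw [← hc] at h
  nlinarith [h]

/-- Quadratic coercivity of the effective Hamiltonian (power case). -/
theorem power_mfg_H_coercive {n : ℕ} (hn : 1 ≤ n)
    (v : (Fin n → ℝ) → ℝ) (hv0 : ∀ x, 0 ≤ v x) (hvlip : ∃ K, LipschitzWith K v) (hvper : ZPeriodic v)
    (P : Fin n → ℝ) (α q : ℝ) (hα : 0 ≤ α) (hq : 0 < q)
    (Rq : ℝ) (hRq1 : 1 ≤ Rq) (hRq : 1 + Rq ^ (q / (q + 1)) ≤ Rq)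
    (u m : (Fin n → ℝ) → ℝ) (H : ℝ)
    (h : PowerMFG v P α q u m H) :
    (∑ i, (P i) ^ 2) / 2 - (1 + Rq) * (∫ y in unitCube n, v y) - Rq * α ^ q ≤ H
    ∧ H ≤ (∑ i, (P i) ^ 2) / 2 - α ^ q := by
  obtain ⟨N, rfl⟩ : ∃ N : ℕ, n = N + 1 := ⟨n - 1, by omega⟩
  obtain ⟨hu, hm, hup, hmp, hmpos, hHJB, hFP, humean, hmmean⟩ := h
  obtain ⟨K, hK⟩ := hvlip
  have hvc : Continuous v := hK.continuous
  have huc : Continuous u := hu.continuous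
  have hmc : Continuous m := hm.continuous
  have hud : Differentiable ℝ u := hu.differentiable (by norm_num)
  have hmd : Differentiable ℝ m := hm.differentiable (by norm_num)
  have hu1 : ContDiff ℝ 1 u := hu.of_le (by norm_num)
  have hm1 : ContDiff ℝ 1 m := hm.of_le (by norm_num)
  have hpdu : ∀ i, ContDiff ℝ 1 (pd i u) := pd_contDiff_one hu
  have hpdm : ∀ i, ContDiff ℝ 1 (pd i m) := pd_contDiff_one hm
  have hpduc : ∀ i, Continuous (pd i u) := fun i => (hpdu i).continuous
  have hpdmc : ∀ i, Continuous (pd i m) := fun i => (hpdm i).continuous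
  have hlapuc : Continuous (lap u) :=
    continuous_finset_sum _ fun i _ => pd_continuous (hpdu i) i
  have hlapmc : Continuous (lap m) :=
    continuous_finset_sum _ fun i _ => pd_continuous (hpdm i) i
  have hA0 : (0:ℝ) ≤ α ^ q := Real.rpow_nonneg hα q
  have hmqc : Continuous fun x => m x ^ q := hmc.rpow_const fun x => Or.inl (hmpos x).ne'
  have hmq1c : Continuous fun x => m x ^ (q+1) := hmc.rpow_const fun x => Or.inl (hmpos x).ne'
  have hSc : Continuous fun x => ∑ i, (pd i u x + P i) ^ 2 :=
    continuous_finset_sum _ fun i _ => ((hpduc i).add continuous_const).pow 2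
  -- ∫ lap u = 0
  have I1 : ∫ x in unitCube (N+1), lap u x = 0 := integral_lap_zero hu hup
  -- ∫ S ≥ ∑ P i ^ 2
  have IS : (∑ i, P i ^ 2) ≤ ∫ x in unitCube (N+1), ∑ i, (pd i u x + P i) ^ 2 := by
    rw [integral_finset_sum _ (fun i _ => intQ (((hpduc i).fun_add continuous_const).fun_pow 2))]
    refine Finset.sum_le_sum fun i _ => ?_
    have h1 : ∫ x in unitCube (N+1), (pd i u x + P i) = P i := by
      rw [integral_add (intQ (hpduc i)) (intQ continuous_const),
        integral_pd_zero hu hup i, integral_const_unitCube, zero_add]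
    have h2 := integral_sq_ge (f := fun x => pd i u x + P i) ((hpduc i).add continuous_const)
    rwa [h1] at h2
  -- E1 : integrate HJB over the cube
  have E1 : H = (∫ x in unitCube (N+1), ∑ i, (pd i u x + P i) ^ 2) / 2
      - (∫ x in unitCube (N+1), v x)
      - α ^ q * ∫ x in unitCube (N+1), m x ^ q := by
    have c12 : Continuous fun x => -lap u x + (∑ i, (pd i u x + P i) ^ 2) / 2 :=
      hlapuc.neg.add (hSc.div_const 2)
    calc H = ∫ _x in unitCube (N+1), H := (integral_const_unitCube H).symm
      _ = ∫ x in unitCube (N+1),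
          (-lap u x + (∑ i, (pd i u x + P i) ^ 2) / 2 - v x - α ^ q * m x ^ q) :=
        (setIntegral_congr_fun measQ fun x _ => hHJB x).symm
      _ = (∫ x in unitCube (N+1), (-lap u x + (∑ i, (pd i u x + P i) ^ 2) / 2 - v x))
          - ∫ x in unitCube (N+1), α ^ q * m x ^ q := by
        rw [integral_sub (intQ (c12.fun_sub hvc)) (intQ (continuous_const.fun_mul hmqc))]
      _ = (∫ x in unitCube (N+1), (-lap u x + (∑ i, (pd i u x + P i) ^ 2) / 2))
          - (∫ x in unitCube (N+1), v x)
          - ∫ x in unitCube (N+1), α ^ q * m x ^ q := by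
        rw [integral_sub (intQ c12) (intQ hvc)]
      _ = (∫ x in unitCube (N+1), -lap u x)
          + (∫ x in unitCube (N+1), (∑ i, (pd i u x + P i) ^ 2) / 2)
          - (∫ x in unitCube (N+1), v x)
          - ∫ x in unitCube (N+1), α ^ q * m x ^ q := by
        rw [integral_add (intQ hlapuc.fun_neg) (intQ (hSc.div_const 2))]
      _ = (∫ x in unitCube (N+1), ∑ i, (pd i u x + P i) ^ 2) / 2
          - (∫ x in unitCube (N+1), v x)
          - α ^ q * ∫ x in unitCube (N+1), m x ^ q := by
        rw [integral_neg, I1, integral_div, integral_const_mul]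
        ring
  -- E2 : integrate HJB against m
  have hmS2 : Continuous fun x => m x * ((∑ i, (pd i u x + P i) ^ 2) / 2) :=
    hmc.mul (hSc.div_const 2)
  have E2 : H = -(∫ x in unitCube (N+1), m x * lap u x)
      + (∫ x in unitCube (N+1), m x * ((∑ i, (pd i u x + P i) ^ 2) / 2))
      - (∫ x in unitCube (N+1), m x * v x)
      - α ^ q * ∫ x in unitCube (N+1), m x ^ (q+1) := by
    have hpt : ∀ x : Fin (N+1) → ℝ, H * m x =
        -(m x * lap u x) + m x * ((∑ i, (pd i u x + P i) ^ 2) / 2) - m x * v x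
          - α ^ q * m x ^ (q+1) := by
      intro x
      have h1 : m x ^ (q+1) = m x ^ q * m x := Real.rpow_add_one (hmpos x).ne' q
      have h2 := hHJB x
      rw [h1]
      nlinarith [h2, (hmpos x).le]
    have c12 : Continuous fun x =>
        -(m x * lap u x) + m x * ((∑ i, (pd i u x + P i) ^ 2) / 2) :=
      (hmc.mul hlapuc).neg.add hmS2
    calc H = H * ∫ x in unitCube (N+1), m x := by rw [hmmean, mul_one]
      _ = ∫ x in unitCube (N+1), H * m x := by rw [integral_const_mul]
      _ = ∫ x in unitCube (N+1),
          (-(m x * lap u x) + m x * ((∑ i, (pd i u x + P i) ^ 2) / 2) - m x * v x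
            - α ^ q * m x ^ (q+1)) :=
        setIntegral_congr_fun measQ fun x _ => hpt x
      _ = (∫ x in unitCube (N+1),
            (-(m x * lap u x) + m x * ((∑ i, (pd i u x + P i) ^ 2) / 2) - m x * v x))
          - ∫ x in unitCube (N+1), α ^ q * m x ^ (q+1) := by
        rw [integral_sub (intQ (c12.fun_sub (hmc.fun_mul hvc))) (intQ (continuous_const.fun_mul hmq1c))]
      _ = (∫ x in unitCube (N+1),
            (-(m x * lap u x) + m x * ((∑ i, (pd i u x + P i) ^ 2) / 2)))
          - (∫ x in unitCube (N+1), m x * v x)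
          - ∫ x in unitCube (N+1), α ^ q * m x ^ (q+1) := by
        rw [integral_sub (intQ c12) (intQ (hmc.fun_mul hvc))]
      _ = -(∫ x in unitCube (N+1), m x * lap u x)
          + (∫ x in unitCube (N+1), m x * ((∑ i, (pd i u x + P i) ^ 2) / 2))
          - (∫ x in unitCube (N+1), m x * v x)
          - α ^ q * ∫ x in unitCube (N+1), m x ^ (q+1) := by
        rw [integral_add (intQ (hmc.fun_mul hlapuc).fun_neg) (intQ hmS2), integral_neg,
          integral_const_mul]
  -- Green identities
  have hsum1c : Continuous fun x => ∑ j, pd j m x * pd j u x :=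
    continuous_finset_sum _ fun j _ => (hpdmc j).mul (hpduc j)
  have hsum2c : Continuous fun x => ∑ j, pd j u x * pd j m x :=
    continuous_finset_sum _ fun j _ => (hpduc j).mul (hpdmc j)
  have hsum3c : Continuous fun x => ∑ j, pd j u x * (m x * (pd j u x + P j)) :=
    continuous_finset_sum _ fun j _ =>
      (hpduc j).mul (hmc.mul ((hpduc j).add continuous_const))
  have g1 : ∫ x in unitCube (N+1), ((∑ j, pd j m x * pd j u x) + m x * lap u x) = 0 :=
    integral_green hm1 hmp hpdu (fun j => hup.pd_per hud j)
  have g2 : ∫ x in unitCube (N+1), ((∑ j, pd j u x * pd j m x) + u x * lap m x) = 0 :=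
    integral_green hu1 hup hpdm (fun j => hmp.pd_per hmd j)
  have g3 : ∫ x in unitCube (N+1), ((∑ j, pd j u x * (m x * (pd j u x + P j)))
      + u x * dvg (fun y j => m y * (pd j u y + P j)) x) = 0 :=
    integral_green hu1 hup (fun j => hm1.mul ((hpdu j).add contDiff_const))
      (fun j => hmp.mul ((hup.pd_per hud j).add_const (P j)))
  have gs1 : (∫ x in unitCube (N+1), ∑ j, pd j m x * pd j u x)
      = -(∫ x in unitCube (N+1), m x * lap u x) := by
    rw [integral_add (intQ hsum1c) (intQ (hmc.fun_mul hlapuc))] at g1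
    linarith
  have gs2 : (∫ x in unitCube (N+1), ∑ j, pd j u x * pd j m x)
      = -(∫ x in unitCube (N+1), u x * lap m x) := by
    rw [integral_add (intQ hsum2c) (intQ (huc.fun_mul hlapmc))] at g2
    linarith
  have gsym : (∫ x in unitCube (N+1), ∑ j, pd j m x * pd j u x)
      = ∫ x in unitCube (N+1), ∑ j, pd j u x * pd j m x :=
    setIntegral_congr_fun measQ fun x _ =>
      Finset.sum_congr rfl fun j _ => mul_comm _ _
  have hdvgm : ∀ x, dvg (fun y j => m y * (pd j u y + P j)) x = -lap m x := by
    intro x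
    have := hFP x
    linarith
  have g3' : ∫ x in unitCube (N+1), ((∑ j, pd j u x * (m x * (pd j u x + P j)))
      + u x * (-lap m x)) = 0 := by
    rw [← setIntegral_congr_fun measQ (fun x _ => by rw [hdvgm x])] at g3
    exact g3
  have iKey : (∫ x in unitCube (N+1), ∑ j, pd j u x * (m x * (pd j u x + P j)))
      = ∫ x in unitCube (N+1), m x * lap u x := by
    rw [integral_add (intQ hsum3c) (intQ (huc.fun_mul hlapmc.fun_neg))] at g3'
    have e1 : (∫ x in unitCube (N+1), u x * (-lap m x))
        = -(∫ x in unitCube (N+1), u x * lap m x) := by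
      rw [← integral_neg]
      exact setIntegral_congr_fun measQ fun x _ => by ring
    rw [e1] at g3'
    have := gsym
    linarith [gs1, gs2]
  -- Upper bound step: pointwise inequality and integration
  have hpt2 : ∀ x : Fin (N+1) → ℝ,
      m x * ((∑ i, (pd i u x + P i) ^ 2) / 2)
        - ∑ j, pd j u x * (m x * (pd j u x + P j))
      ≤ m x * ((∑ i, P i ^ 2) / 2) := by
    intro x
    have e1 : ∑ j, pd j u x * (m x * (pd j u x + P j))
        = m x * ∑ j, pd j u x * (pd j u x + P j) := by
      rw [Finset.mul_sum]
      exact Finset.sum_congr rfl fun j _ => by ring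
    have e3 : ∑ j, ((pd j u x + P j) ^ 2 / 2 - pd j u x * (pd j u x + P j))
        ≤ ∑ j, P j ^ 2 / 2 :=
      Finset.sum_le_sum fun j _ => by nlinarith [sq_nonneg (pd j u x)]
    rw [Finset.sum_sub_distrib, ← Finset.sum_div, ← Finset.sum_div] at e3
    calc m x * ((∑ i, (pd i u x + P i) ^ 2) / 2)
          - ∑ j, pd j u x * (m x * (pd j u x + P j))
        = m x * ((∑ i, (pd i u x + P i) ^ 2) / 2 - ∑ j, pd j u x * (pd j u x + P j)) := by
          rw [e1]; ring
      _ ≤ m x * ((∑ i, P i ^ 2) / 2) :=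
          mul_le_mul_of_nonneg_left (by linarith) (hmpos x).le
  have Up1 : H ≤ (∑ i, P i ^ 2) / 2 - (∫ x in unitCube (N+1), m x * v x)
      - α ^ q * ∫ x in unitCube (N+1), m x ^ (q+1) := by
    have hmono : (∫ x in unitCube (N+1),
        (m x * ((∑ i, (pd i u x + P i) ^ 2) / 2)
          - ∑ j, pd j u x * (m x * (pd j u x + P j))))
        ≤ ∫ x in unitCube (N+1), m x * ((∑ i, P i ^ 2) / 2) :=
      setIntegral_mono_on (intQ (hmS2.sub hsum3c))
        (intQ (hmc.mul continuous_const)) measQ (fun x _ => hpt2 x)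
    rw [integral_sub (intQ hmS2) (intQ hsum3c)] at hmono
    have hconst : (∫ x in unitCube (N+1), m x * ((∑ i, P i ^ 2) / 2))
        = (∑ i, P i ^ 2) / 2 := by
      rw [integral_mul_const, hmmean, one_mul]
    rw [hconst] at hmono
    rw [E2]
    linarith [iKey]
  -- nonnegativity facts
  have hmv0 : 0 ≤ ∫ x in unitCube (N+1), m x * v x :=
    setIntegral_nonneg measQ fun x _ => mul_nonneg (hmpos x).le (hv0 x)
  have hV0 : 0 ≤ ∫ x in unitCube (N+1), v x := setIntegral_nonneg measQ fun x _ => hv0 x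
  have hIq0 : 0 ≤ ∫ x in unitCube (N+1), m x ^ q :=
    setIntegral_nonneg measQ fun x _ => Real.rpow_nonneg (hmpos x).le q
  -- Jensen : 1 ≤ ∫ m^{q+1}
  have hcontOn : ∀ p : ℝ, 0 ≤ p → ContinuousOn (fun s : ℝ => s ^ p) (Ici 0) :=
    fun p hp x _ => (Real.continuousAt_rpow_const x p (Or.inr hp)).continuousWithinAt
  have ht1 : 1 ≤ ∫ x in unitCube (N+1), m x ^ (q+1) := by
    have hj := jensen_convex (g := fun s : ℝ => s ^ (q+1)) (f := m)
      (convexOn_rpow (by linarith)) (hcontOn _ (by linarith)) hmc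
      (fun x => (hmpos x).le) hmq1c
    simp only [hmmean, Real.one_rpow] at hj
    exact hj
  -- Jensen : ∫ m^q ≤ (∫ m^{q+1})^{q/(q+1)}
  have hq1 : (0:ℝ) < q + 1 := by linarith
  have hIqt : (∫ x in unitCube (N+1), m x ^ q)
      ≤ (∫ x in unitCube (N+1), m x ^ (q+1)) ^ (q/(q+1)) := by
    have hθ0 : (0:ℝ) ≤ q/(q+1) := by positivity
    have hθ1 : q/(q+1) ≤ 1 := by rw [div_le_one hq1]; linarith
    have hj := jensen_concave (g := fun s : ℝ => s ^ (q/(q+1)))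
      (f := fun x => m x ^ (q+1))
      (Real.concaveOn_rpow hθ0 hθ1) (hcontOn _ hθ0) hmq1c
      (fun x => Real.rpow_nonneg (hmpos x).le _)
      (hmq1c.rpow_const fun x => Or.inr hθ0)
    have e : ∀ x : Fin (N+1) → ℝ, (m x ^ (q+1)) ^ (q/(q+1)) = m x ^ q := by
      intro x
      rw [← Real.rpow_mul (hmpos x).le]
      congr 1
      field_simp
    rwa [setIntegral_congr_fun measQ (fun x _ => e x)] at hj
  -- Lower preliminary : H ≥ p2 - V - A Iq
  have Low1 : (∑ i, P i ^ 2) / 2 - (∫ x in unitCube (N+1), v x)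
      - α ^ q * (∫ x in unitCube (N+1), m x ^ q) ≤ H := by
    rw [E1]
    have : (∑ i, P i ^ 2) / 2 ≤ (∫ x in unitCube (N+1), ∑ i, (pd i u x + P i) ^ 2) / 2 := by
      linarith
    linarith
  -- combine
  set A := α ^ q with hA
  set t := ∫ x in unitCube (N+1), m x ^ (q+1) with ht
  set Iq := ∫ x in unitCube (N+1), m x ^ q with hIq'
  set V := ∫ x in unitCube (N+1), v x with hV
  set Vm := ∫ x in unitCube (N+1), m x * v x with hVm
  set θ := q/(q+1) with hθdef
  have hAt : A * t ≤ V + A * Iq := by linarith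
  have hAIq : A * Iq ≤ A * t ^ θ := mul_le_mul_of_nonneg_left hIqt hA0
  have htθt : t ^ θ ≤ t := by
    have := Real.rpow_le_rpow_of_exponent_le ht1 (show θ ≤ 1 by
      rw [hθdef, div_le_one hq1]; linarith)
    rwa [Real.rpow_one] at this
  have hKey2 : A * Iq ≤ Rq * V + Rq * A := by
    by_cases hcase : t ≤ Rq
    · have h1 : A * t ^ θ ≤ A * t := mul_le_mul_of_nonneg_left htθt hA0
      have h2 : A * t ≤ A * Rq := mul_le_mul_of_nonneg_left hcase hA0
      have h2' : A * Rq = Rq * A := mul_comm _ _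
      have hRV : 0 ≤ Rq * V := mul_nonneg (by linarith) hV0
      linarith
    · push_neg at hcase
      have ht0 : (0:ℝ) < t := by linarith
      have hβ0 : (0:ℝ) ≤ 1/(q+1) := by positivity
      have hβ : t = t ^ θ * t ^ (1/(q+1)) := by
        rw [← Real.rpow_add ht0]
        rw [hθdef]
        rw [show q/(q+1) + 1/(q+1) = 1 by field_simp]
        rw [Real.rpow_one]
      have h1 : Rq ^ (1/(q+1)) ≤ t ^ (1/(q+1)) :=
        Real.rpow_le_rpow (by linarith) hcase.le hβ0
      have h2 : 1 ≤ Rq ^ (1/(q+1)) := Real.one_le_rpow hRq1 hβ0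
      have eRq : Rq ^ θ * Rq ^ (1/(q+1)) = Rq := by
        rw [← Real.rpow_add (by linarith : (0:ℝ) < Rq), hθdef,
          show q/(q+1) + 1/(q+1) = 1 by field_simp, Real.rpow_one]
      have h3 : 1 + Rq ≤ Rq * Rq ^ (1/(q+1)) := by
        have h4 : (1 + Rq ^ θ) * Rq ^ (1/(q+1)) ≤ Rq * Rq ^ (1/(q+1)) :=
          mul_le_mul_of_nonneg_right hRq (by linarith)
        have hdist : (1 + Rq ^ θ) * Rq ^ (1/(q+1)) = Rq ^ (1/(q+1)) + Rq := by
          rw [add_mul, one_mul, eRq]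
        linarith
      have htθ0 : (0:ℝ) < t ^ θ := Real.rpow_pos_of_pos ht0 θ
      have h5 : (1 + Rq) * t ^ θ ≤ Rq * t := by
        calc (1 + Rq) * t ^ θ ≤ (Rq * Rq ^ (1/(q+1))) * t ^ θ :=
              mul_le_mul_of_nonneg_right h3 htθ0.le
          _ ≤ (Rq * t ^ (1/(q+1))) * t ^ θ :=
              mul_le_mul_of_nonneg_right
                (mul_le_mul_of_nonneg_left h1 (by linarith)) htθ0.le
          _ = Rq * (t ^ θ * t ^ (1/(q+1))) := by ring
          _ = Rq * t := by rw [← hβ]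
      have h6 : t ^ θ ≤ Rq * (t - t ^ θ) := by
        have e6a : (1 + Rq) * t ^ θ = t ^ θ + Rq * t ^ θ := by ring
        have e6b : Rq * (t - t ^ θ) = Rq * t - Rq * t ^ θ := by ring
        linarith
      have h7 : A * (t - t ^ θ) ≤ V := by
        have e7 : A * (t - t ^ θ) = A * t - A * t ^ θ := by ring
        linarith
      have h8 : A * t ^ θ ≤ Rq * (A * (t - t ^ θ)) := by
        have h8a := mul_le_mul_of_nonneg_left h6 hA0
        have e8 : A * (Rq * (t - t ^ θ)) = Rq * (A * (t - t ^ θ)) := by ring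
        linarith
      have h9 : Rq * (A * (t - t ^ θ)) ≤ Rq * V :=
        mul_le_mul_of_nonneg_left h7 (by linarith)
      have hRA : 0 ≤ Rq * A := mul_nonneg (by linarith) hA0
      linarith
  constructor
  · linarith
  · have h1 : A * 1 ≤ A * t := mul_le_mul_of_nonneg_left ht1 hA0
    rw [mul_one] at h1
    linarith
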